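/- arXiv:2505.22620 — 3 statements merged into one kernel-verified Lean document; each statement's English description precedes it below -/
import Mathlib

section
/- Let H be an enumerated K₄-free graph and X a type of H. If the neighborhood of the type vertex t in X contains a triangle, then every one-labeled graph G in Age_H(X) has no edges. -/
/-- Auxiliary relation defining the graph G ⊕ (X₀,…,X_{n−1}): on an n-labeled graph `G`
with labelling `χ`, extended by the vertices 0,…,ℓ−1 of the enumerated graph `H`, where
the type `X_c` on level ℓ has neighbourhood `nbr c` of its type vertex t. -/
def oplusRel {V : Type} (G : SimpleGraph V) {n : ℕ} (χ : V → Fin n)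
    (H : SimpleGraph ℕ) (ℓ : ℕ) (nbr : Fin n → Set ℕ) :
    (V ⊕ Fin ℓ) → (V ⊕ Fin ℓ) → Prop
  | Sum.inl a, Sum.inl b => G.Adj a b
  | Sum.inl a, Sum.inr i => (i : ℕ) ∈ nbr (χ a)
  | Sum.inr i, Sum.inr j => H.Adj (i : ℕ) (j : ℕ)
  | Sum.inr _, Sum.inl _ => False

/-- The graph G ⊕ (X₀,…,X_{n−1}) on vertex set V ⊕ Fin ℓ. -/
def oplus {V : Type} (G : SimpleGraph V) {n : ℕ} (χ : V → Fin n)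
    (H : SimpleGraph ℕ) (ℓ : ℕ) (nbr : Fin n → Set ℕ) : SimpleGraph (V ⊕ Fin ℓ) :=
  SimpleGraph.fromRel (oplusRel G χ H ℓ nbr)

/-- G ∈ Age_H(X₀,…,X_{n−1}): the graph G ⊕ (X₀,…,X_{n−1}) embeds into H. -/
def AgeMem {V : Type} [Fintype V] (G : SimpleGraph V) {n : ℕ} (χ : V → Fin n)
    (H : SimpleGraph ℕ) (ℓ : ℕ) (nbr : Fin n → Set ℕ) : Prop :=
  Nonempty ((oplus G χ H ℓ nbr) ↪g H)

/-- if H is an enumerated K₄-free graph and X is a type of H whose type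
vertex t has a triangle in its neighbourhood, then every 1-labeled graph in Age_H(X)
has no edges. -/
theorem age_edgeless_of_triangle (H : SimpleGraph ℕ) (hH : H.CliqueFree 4)
    (ℓ : ℕ) (nbr : Set ℕ) (hsub : nbr ⊆ Set.Iio ℓ)
    (a b c : ℕ) (ha : a ∈ nbr) (hb : b ∈ nbr) (hc : c ∈ nbr)
    (hab : H.Adj a b) (hac : H.Adj a c) (hbc : H.Adj b c)
    {V : Type} [Fintype V] (G : SimpleGraph V) (χ : V → Fin 1)
    (hAge : AgeMem G χ H ℓ (fun _ => nbr)) :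
    ∀ u v : V, ¬ G.Adj u v := by
  intro u v huv
  obtain ⟨f⟩ := hAge
  have haℓ : a < ℓ := hsub ha
  have hbℓ : b < ℓ := hsub hb
  set A : V ⊕ Fin ℓ := Sum.inr ⟨a, haℓ⟩
  set B : V ⊕ Fin ℓ := Sum.inr ⟨b, hbℓ⟩
  have adj : ∀ x y : V ⊕ Fin ℓ, x ≠ y →
      oplusRel G χ H ℓ (fun _ => nbr) x y → (oplus G χ H ℓ (fun _ => nbr)).Adj x y := by
    intro x y hxy h
    exact ⟨hxy, Or.inl h⟩
  have h1 : (oplus G χ H ℓ (fun _ => nbr)).Adj (Sum.inl u) (Sum.inl v) :=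
    adj _ _ (by simp [huv.ne]) huv
  have h2 : (oplus G χ H ℓ (fun _ => nbr)).Adj (Sum.inl u) A :=
    adj _ _ (by simp [A]) ha
  have h3 : (oplus G χ H ℓ (fun _ => nbr)).Adj (Sum.inl u) B :=
    adj _ _ (by simp [B]) hb
  have h4 : (oplus G χ H ℓ (fun _ => nbr)).Adj (Sum.inl v) A :=
    adj _ _ (by simp [A]) ha
  have h5 : (oplus G χ H ℓ (fun _ => nbr)).Adj (Sum.inl v) B :=
    adj _ _ (by simp [B]) hb
  have h6 : (oplus G χ H ℓ (fun _ => nbr)).Adj A B := by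
    refine adj _ _ ?_ hab
    simp only [A, B, Ne, Sum.inr.injEq]
    intro h
    exact hab.ne (congrArg Fin.val h)
  have hclique : H.IsNClique 4 {f (Sum.inl u), f (Sum.inl v), f A, f B} := by
    refine ⟨?_, ?_⟩
    · intro x hx y hy hxy
      simp only [Finset.coe_insert, Set.mem_insert_iff, Finset.coe_singleton,
        Set.mem_singleton_iff] at hx hy
      rcases hx with rfl | rfl | rfl | rfl <;> rcases hy with rfl | rfl | rfl | rfl <;>
        first
        | exact absurd rfl hxy
        | exact f.map_adj_iff.2 h1 | exact f.map_adj_iff.2 h2 | exact f.map_adj_iff.2 h3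
        | exact f.map_adj_iff.2 h4 | exact f.map_adj_iff.2 h5 | exact f.map_adj_iff.2 h6
        | exact (f.map_adj_iff.2 h1).symm | exact (f.map_adj_iff.2 h2).symm
        | exact (f.map_adj_iff.2 h3).symm | exact (f.map_adj_iff.2 h4).symm
        | exact (f.map_adj_iff.2 h5).symm | exact (f.map_adj_iff.2 h6).symm
    · rw [Finset.card_insert_of_notMem, Finset.card_insert_of_notMem,
        Finset.card_insert_of_notMem, Finset.card_singleton]
      · simp only [Finset.mem_singleton]
        exact fun h => h6.ne (f.injective h)
      · simp only [Finset.mem_insert, Finset.mem_singleton]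
        push_neg
        exact ⟨fun h => h4.ne (f.injective h), fun h => h5.ne (f.injective h)⟩
      · simp only [Finset.mem_insert, Finset.mem_singleton]
        push_neg
        exact ⟨fun h => h1.ne (f.injective h), fun h => h2.ne (f.injective h),
          fun h => h3.ne (f.injective h)⟩
  exact hH _ hclique
end

section
/- Let H be an enumerated K₄-free graph and X a type of H such that the neighborhood of t in X contains an edge. Then every graph in Age_H(X) is triangle-free. -/
namespace SimpleGraph

variable {α β : Type*} {G : SimpleGraph α} {G' : SimpleGraph β} {n : ℕ}

theorem IsNClique.map_embedding {s : Finset α} (hs : G.IsNClique n s) (f : G ↪g G') :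
    G'.IsNClique n (s.map f.toEmbedding) :=
  hs.map.mono <| (map_le_iff_le_comap _ _ _).mpr fun _ _ ↦ f.map_adj_iff.mpr

theorem CliqueFree.of_embedding_of_forall_adj (hG' : G'.CliqueFree (n + 1)) (f : G ↪g G')
    (v : β) (hv : ∀ x, G'.Adj v (f x)) : G.CliqueFree n := by
  classical
  intro s hs
  refine hG' (insert v (s.map f.toEmbedding)) ((hs.map_embedding f).insert ?_)
  simp [hv]

end SimpleGraph

section Oplus

variable {V : Type} (G : SimpleGraph V) {n : ℕ} (χ : V → Fin n) (H : SimpleGraph ℕ) (ℓ : ℕ)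
  (nbr : Fin n → Set ℕ)

theorem oplus_adj_inl_inl {x y : V} :
    (oplus G χ H ℓ nbr).Adj (.inl x) (.inl y) ↔ G.Adj x y := by
  simp only [oplus, SimpleGraph.fromRel_adj, ne_eq, Sum.inl.injEq, oplusRel, G.adj_comm y x,
    or_self]
  exact ⟨And.right, fun h ↦ ⟨h.ne, h⟩⟩

theorem oplus_adj_inr_inl {i : Fin ℓ} {x : V} :
    (oplus G χ H ℓ nbr).Adj (.inr i) (.inl x) ↔ (i : ℕ) ∈ nbr (χ x) := by
  simp [oplus, oplusRel]

def oplusInl : G ↪g oplus G χ H ℓ nbr where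
  toEmbedding := .inl
  map_rel_iff' := oplus_adj_inl_inl G χ H ℓ nbr

end Oplus

theorem age_triangle_free_of_edge_general (H : SimpleGraph ℕ) (hH : H.CliqueFree 4)
    (ℓ : ℕ) (nbr : Set ℕ) (hsub : nbr ⊆ Set.Iio ℓ)
    (a : ℕ) (ha : a ∈ nbr)
    {V : Type} [Fintype V] (G : SimpleGraph V) (χ : V → Fin 1)
    (hAge : AgeMem G χ H ℓ (fun _ => nbr)) :
    G.CliqueFree 3 := by
  obtain ⟨f⟩ := hAge
  have hOplus : (oplus G χ H ℓ (fun _ => nbr)).CliqueFree 4 := hH.comap f.isContained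
  exact hOplus.of_embedding_of_forall_adj (oplusInl G χ H ℓ _) (.inr ⟨a, hsub ha⟩)
    fun _ ↦ (oplus_adj_inr_inl G χ H ℓ _).mpr ha

/-- if H is an enumerated K₄-free graph and X is a type of H whose type
vertex t has an edge in its neighbourhood, then every graph in Age_H(X) is triangle-free. -/
theorem age_triangle_free_of_edge (H : SimpleGraph ℕ) (hH : H.CliqueFree 4)
    (ℓ : ℕ) (nbr : Set ℕ) (hsub : nbr ⊆ Set.Iio ℓ)
    (a b : ℕ) (ha : a ∈ nbr) (hb : b ∈ nbr) (hab : H.Adj a b)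
    {V : Type} [Fintype V] (G : SimpleGraph V) (χ : V → Fin 1)
    (hAge : AgeMem G χ H ℓ (fun _ => nbr)) :
    G.CliqueFree 3 :=
  age_triangle_free_of_edge_general H hH ℓ nbr hsub a ha G χ hAge
end

section
/- Let H be an enumerated K₄-free graph and X₀, X₁ types of H on the same level ℓ such that there exists i < ℓ with t adjacent to i in both X₀ and X₁. Then no graph in Age_H(X₀, X₁) contains a triangle using vertices of both labels. -/
/-!
Every vertex of `G` is joined in `G ⊕ (X₀, X₁)` to the common neighbour `i` of both types, so `i`
is a cone vertex over the copy of `G`. A triangle of `G` together with `i` is then a `K₄` in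
`G ⊕ (X₀, X₁)`, which embeds into the `K₄`-free graph `H`. Hence `G` has no triangles at all.
-/

namespace SimpleGraph

variable {V : Type} {G : SimpleGraph V} {n : ℕ} {χ : V → Fin n} {H : SimpleGraph ℕ} {ℓ : ℕ}
  {nbr : Fin n → Set ℕ}

theorem oplus_adj_inl_inl {a b : V} :
    (oplus G χ H ℓ nbr).Adj (.inl a) (.inl b) ↔ G.Adj a b := by
  simp only [oplus, fromRel_adj, oplusRel, ne_eq, Sum.inl.injEq]
  exact ⟨fun h => h.2.elim id .symm, fun h => ⟨h.ne, .inl h⟩⟩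

theorem oplus_adj_inl_inr {a : V} {j : Fin ℓ} :
    (oplus G χ H ℓ nbr).Adj (.inl a) (.inr j) ↔ (j : ℕ) ∈ nbr (χ a) := by
  simp [oplus, oplusRel]

theorem map_inl_le_oplus : G.map Function.Embedding.inl ≤ oplus G χ H ℓ nbr := by
  intro x y hxy
  obtain ⟨a, b, hab, rfl, rfl⟩ := (map_adj _ _ _ _).1 hxy
  exact oplus_adj_inl_inl.2 hab

theorem cliqueFree_of_cliqueFree_oplus_succ {k : ℕ} (j : Fin ℓ) (hj : ∀ c, (j : ℕ) ∈ nbr c)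
    (h : (oplus G χ H ℓ nbr).CliqueFree (k + 1)) : G.CliqueFree k := by
  classical
  intro s hs
  refine h (insert (.inr j) (s.map .inl)) ((hs.map.mono map_inl_le_oplus).insert ?_)
  intro b hb
  obtain ⟨a, -, rfl⟩ := Finset.mem_map.1 hb
  exact (oplus_adj_inl_inr.2 (hj _)).symm

end SimpleGraph

theorem AgeMem.cliqueFree_oplus {V : Type} [Fintype V] {G : SimpleGraph V} {n : ℕ}
    {χ : V → Fin n} {H : SimpleGraph ℕ} {ℓ : ℕ} {nbr : Fin n → Set ℕ} {k : ℕ}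
    (hAge : AgeMem G χ H ℓ nbr) (hH : H.CliqueFree k) : (oplus G χ H ℓ nbr).CliqueFree k :=
  hH.comap hAge.some.isContained

open SimpleGraph in
theorem age_no_bichromatic_triangle_general (H : SimpleGraph ℕ) (hH : H.CliqueFree 4)
    (ℓ : ℕ) (nbr : Fin 2 → Set ℕ)
    (i : ℕ) (hiℓ : i < ℓ) (hi0 : i ∈ nbr 0) (hi1 : i ∈ nbr 1)
    {V : Type} [Fintype V] (G : SimpleGraph V) (χ : V → Fin 2)
    (hAge : AgeMem G χ H ℓ nbr) :
    ∀ u v w : V, G.Adj u v → G.Adj u w → G.Adj v w → χ u = χ v ∧ χ u = χ w := by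
  intro u v w huv huw hvw
  have hi : ∀ c, i ∈ nbr c := fun c => by fin_cases c <;> assumption
  have hG : G.CliqueFree 3 :=
    cliqueFree_of_cliqueFree_oplus_succ ⟨i, hiℓ⟩ hi (hAge.cliqueFree_oplus hH)
  classical
  exact (hG {u, v, w} (is3Clique_triple_iff.2 ⟨huv, huw, hvw⟩)).elim

/-- let H be an enumerated K₄-free graph and X₀, X₁ types of H on the same
level ℓ such that t is adjacent to some i < ℓ in both X₀ and X₁. Then no graph in
Age_H(X₀, X₁) contains a triangle using vertices of both labels (every triangle is
monochromatic). -/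
theorem age_no_bichromatic_triangle (H : SimpleGraph ℕ) (hH : H.CliqueFree 4)
    (ℓ : ℕ) (nbr : Fin 2 → Set ℕ) (hsub : ∀ c, nbr c ⊆ Set.Iio ℓ)
    (i : ℕ) (hiℓ : i < ℓ) (hi0 : i ∈ nbr 0) (hi1 : i ∈ nbr 1)
    {V : Type} [Fintype V] (G : SimpleGraph V) (χ : V → Fin 2)
    (hAge : AgeMem G χ H ℓ nbr) :
    ∀ u v w : V, G.Adj u v → G.Adj u w → G.Adj v w → χ u = χ v ∧ χ u = χ w :=
  age_no_bichromatic_triangle_general H hH ℓ nbr i hiℓ hi0 hi1 G χ hAge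
end
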